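/- Let ξ, η ∈ c₀* with ξ_n > 0 for every n and ξ ≺ η. Then there exists a matrix W : ℕ × ℕ → ℝ whose rows form an orthonormal family in ℓ²(ℕ) (i.e., W is the matrix of a co-isometry on real ℓ²(ℕ)) such that ξ_i = ∑_{j=1}^∞ W_{ij}² η_j for every i. -/

import Mathlib

/-! Rows are built one at a time. At stage `k` one holds a family `g` of finitely supported
vectors that is orthonormal for the standard form and diagonal, with entries `μ`, for the
`η`-weighted form (initially the standard basis and `μ = η`), such that `μ → 0` and
`(ξ_k, ξ_{k+1}, …) ≺ μ`. Since `ξ_k ≤ μ_0` and `μ → 0 < ξ_k`, some `p` has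
`μ_{p+1} < ξ_k ≤ μ_p`; a rotation in the plane of `g_p, g_{p+1}` yields a unit vector `f` of
weighted norm `ξ_k`, and the orthogonal rotated vector, of weight `μ_p + μ_{p+1} - ξ_k`, replaces
`g_p, g_{p+1}`. The new weights majorize `(ξ_{k+1}, …)`, and all later rows lie in the span of
the new family, which is orthogonal to `f`. -/

noncomputable section

open Filter Finset

/-- `ξ ∈ c₀*`: a nonnegative, nonincreasing sequence converging to `0`
(indexed from `0` here; the paper indexes from `1`). -/
def IsCoStar (ξ : ℕ → ℝ) : Prop :=
  (∀ n, 0 ≤ ξ n) ∧ Antitone ξ ∧ Tendsto ξ atTop (nhds 0)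

/-- `ξ ≺ η` (η majorizes ξ): all partial sums of `ξ` are dominated by those of `η`. -/
def Maj (ξ η : ℕ → ℝ) : Prop :=
  ∀ n : ℕ, ∑ j ∈ range n, ξ j ≤ ∑ j ∈ range n, η j

/-- `ξ ≼ η` (η strongly majorizes ξ): `ξ ≺ η` and
`liminf_n ∑_{j<n} (η_j - ξ_j) = 0` (the liminf taken in the extended reals). -/
def SMaj (ξ η : ℕ → ℝ) : Prop :=
  Maj ξ η ∧
    liminf (fun n => ((∑ j ∈ range n, (η j - ξ j) : ℝ) : EReal)) atTop = 0

/-- A matrix `U : ℕ × ℕ → ℝ` is orthogonal if its rows form an orthonormal family in ℓ²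
and its columns form an orthonormal family in ℓ². -/
def OrthogonalMatrix (U : ℕ → ℕ → ℝ) : Prop :=
  (∀ i i', HasSum (fun j => U i j * U i' j) (if i = i' then (1 : ℝ) else 0)) ∧
  (∀ j j', HasSum (fun i => U i j * U i j') (if j = j' then (1 : ℝ) else 0))

/-- A matrix `Q` is orthostochastic if it is the entrywise square of an orthogonal matrix. -/
def Orthostochastic (Q : ℕ → ℕ → ℝ) : Prop :=
  ∃ U : ℕ → ℕ → ℝ, OrthogonalMatrix U ∧ ∀ i j, Q i j = (U i j) ^ 2

open Topology Submodule

lemma exists_seq_of_step {α : Type*} {P : ℕ → α → Prop} {R : ℕ → α → α → Prop} {a₀ : α}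
    (h₀ : P 0 a₀) (hstep : ∀ k a, P k a → ∃ b, P (k + 1) b ∧ R k a b) :
    ∃ s : ℕ → α, ∀ k, P k (s k) ∧ R k (s k) (s (k + 1)) := by
  classical
  have hstep' : ∀ k a, ∃ b, P k a → P (k + 1) b ∧ R k a b := fun k a =>
    if h : P k a then (hstep k a h).imp fun _ hb _ => hb else ⟨a, fun h' => absurd h' h⟩
  choose F hF using hstep'
  let s : ℕ → α := fun k => Nat.rec a₀ F k
  have hP : ∀ k, P k (s k) := fun k => by
    induction k with
    | zero => exact h₀
    | succ k ih => exact (hF k _ ih).1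
  exact ⟨s, fun k => ⟨hP k, (hF k _ (hP k)).2⟩⟩

lemma exists_ge_and_succ_lt {β : Type*} [LinearOrder β] {a : ℕ → β} {c : β} (h₀ : c ≤ a 0)
    {j : ℕ} (hj : a j < c) : ∃ p, c ≤ a p ∧ a (p + 1) < c := by
  induction j with
  | zero => exact absurd h₀ hj.not_ge
  | succ j ih =>
    by_cases h : a j < c
    exacts [ih h, ⟨j, not_lt.1 h, hj⟩]

lemma exists_sq_add_sq_eq_one_of_mem_Icc {a b x : ℝ} (hx : x ∈ Set.Icc b a) :
    ∃ c s : ℝ, c ^ 2 + s ^ 2 = 1 ∧ c ^ 2 * a + s ^ 2 * b = x := by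
  rw [← segment_eq_Icc (hx.1.trans hx.2)] at hx
  obtain ⟨u, v, hu, hv, huv, rfl⟩ := hx
  refine ⟨√v, √u, ?_, ?_⟩
  · rw [Real.sq_sqrt hv, Real.sq_sqrt hu, add_comm, huv]
  · rw [Real.sq_sqrt hv, Real.sq_sqrt hu, smul_eq_mul, smul_eq_mul]; ring

def mergeAt {α : Type*} (x : ℕ → α) (p : ℕ) (a : α) : ℕ → α :=
  fun j => if j < p then x j else if j = p then a else x (j + 1)

section mergeAt

variable {α : Type*} (x : ℕ → α) (p : ℕ) (a : α)

lemma mergeAt_of_lt {j : ℕ} (h : j < p) : mergeAt x p a j = x j := if_pos h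

@[simp]
lemma mergeAt_self : mergeAt x p a p = a := by simp [mergeAt]

lemma mergeAt_of_gt {j : ℕ} (h : p < j) : mergeAt x p a j = x (j + 1) := by
  simp [mergeAt, h.not_gt, h.ne']

lemma tendsto_mergeAt {l : Filter α} (h : Tendsto x atTop l) :
    Tendsto (mergeAt x p a) atTop l :=
  ((tendsto_add_atTop_iff_nat 1).2 h).congr' <|
    (eventually_gt_atTop p).mono fun _ hj => (mergeAt_of_gt x p a hj).symm

lemma sum_range_mergeAt [AddCommGroup α] {n : ℕ} (hn : p < n) :
    ∑ i ∈ range n, mergeAt x p a i = ∑ i ∈ range (n + 1), x i - (x p + x (p + 1)) + a := by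
  induction n, hn using Nat.le_induction with
  | base =>
    have : ∑ i ∈ range p, mergeAt x p a i = ∑ i ∈ range p, x i :=
      sum_congr rfl fun i hi => mergeAt_of_lt x p a (mem_range.1 hi)
    simp only [sum_range_succ, this, mergeAt_self]
    abel
  | succ n hn ih =>
    rw [sum_range_succ, ih, mergeAt_of_gt x p a hn, sum_range_succ _ (n + 1)]
    abel

end mergeAt

lemma Maj.tail_mergeAt {x μ : ℕ → ℝ} (h : Maj x μ) (hx : Antitone x) (p : ℕ) :
    Maj (fun i => x (i + 1)) (mergeAt μ p (μ p + μ (p + 1) - x 0)) := by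
  intro n
  rcases le_or_gt n p with hn | hn
  · calc ∑ i ∈ range n, x (i + 1)
        ≤ ∑ i ∈ range n, x i := sum_le_sum fun i _ => hx i.le_succ
      _ ≤ ∑ i ∈ range n, μ i := h n
      _ = _ := sum_congr rfl fun i hi => (mergeAt_of_lt _ _ _ ((mem_range.1 hi).trans_le hn)).symm
  · have h' := h (n + 1)
    rw [sum_range_succ'] at h'
    rw [sum_range_mergeAt _ _ _ hn]
    linarith

section BilinForm

variable {V : Type*} [AddCommGroup V] [Module ℝ V]

def GramDiagonal (B : LinearMap.BilinForm ℝ V) (g : ℕ → V) (ν : ℕ → ℝ) : Prop :=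
  ∀ j j', B (g j) (g j') = if j = j' then ν j else 0

variable {B : LinearMap.BilinForm ℝ V} {g : ℕ → V} {ν : ℕ → ℝ}

lemma GramDiagonal.mergeAt_rotate (h : GramDiagonal B g ν) (p : ℕ) (c s : ℝ) :
    GramDiagonal B (mergeAt g p (-s • g p + c • g (p + 1)))
      (mergeAt ν p (s ^ 2 * ν p + c ^ 2 * ν (p + 1))) := by
  intro j j'
  simp only [mergeAt]
  split_ifs <;> simp only [map_add, map_smul, LinearMap.add_apply, LinearMap.smul_apply,
    smul_eq_mul, h _ _] <;> split_ifs <;> first | ring1 | (exfalso; omega)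

lemma GramDiagonal.apply_rotate_self (h : GramDiagonal B g ν) (p : ℕ) (c s : ℝ) :
    B (c • g p + s • g (p + 1)) (c • g p + s • g (p + 1)) = c ^ 2 * ν p + s ^ 2 * ν (p + 1) := by
  simp only [map_add, map_smul, LinearMap.add_apply, LinearMap.smul_apply, smul_eq_mul, h _ _]
  split_ifs <;> first | ring1 | (exfalso; omega)

lemma GramDiagonal.apply_rotate_mergeAt (h : GramDiagonal B g ν) (p : ℕ) (c s : ℝ) (j : ℕ) :
    B (c • g p + s • g (p + 1)) (mergeAt g p (-s • g p + c • g (p + 1)) j) =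
      if j = p then c * s * (ν (p + 1) - ν p) else 0 := by
  simp only [mergeAt]
  split_ifs <;> simp only [map_add, map_smul, LinearMap.add_apply, LinearMap.smul_apply,
    smul_eq_mul, h _ _] <;> split_ifs <;> first | ring1 | (exfalso; omega)

lemma span_range_mergeAt_le {v : V} (hv : v ∈ span ℝ (Set.range g)) (p : ℕ) :
    span ℝ (Set.range (mergeAt g p v)) ≤ span ℝ (Set.range g) := by
  rw [span_le]
  rintro _ ⟨j, rfl⟩
  unfold mergeAt
  split_ifs
  exacts [subset_span ⟨j, rfl⟩, hv, subset_span ⟨j + 1, rfl⟩]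

lemma smul_add_smul_mem_span_range (g : ℕ → V) (i j : ℕ) (a b : ℝ) :
    a • g i + b • g j ∈ span ℝ (Set.range g) :=
  add_mem (smul_mem _ _ (subset_span ⟨i, rfl⟩)) (smul_mem _ _ (subset_span ⟨j, rfl⟩))

structure IsStage (B₁ B₂ : LinearMap.BilinForm ℝ V) (ξ : ℕ → ℝ) (k : ℕ) (g : ℕ → V)
    (μ : ℕ → ℝ) : Prop where
  orthonormal : GramDiagonal B₁ g 1
  gramDiagonal : GramDiagonal B₂ g μ
  tendsto : Tendsto μ atTop (𝓝 0)
  maj : Maj (fun i => ξ (k + i)) μ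

variable {B₁ B₂ : LinearMap.BilinForm ℝ V} {ξ μ : ℕ → ℝ} {k : ℕ}

lemma IsStage.exists_next (h : IsStage B₁ B₂ ξ k g μ) (hξ : Antitone ξ) (hpos : 0 < ξ k) :
    ∃ g' μ', IsStage B₁ B₂ ξ (k + 1) g' μ' ∧ ∃ f, B₁ f f = 1 ∧ B₂ f f = ξ k ∧
      (∀ j, B₁ f (g' j) = 0) ∧ f ∈ span ℝ (Set.range g) ∧
      span ℝ (Set.range g') ≤ span ℝ (Set.range g) := by
  obtain ⟨j, hj⟩ := (h.tendsto.eventually_lt_const hpos).exists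
  obtain ⟨p, hp, hp₁⟩ := exists_ge_and_succ_lt (by simpa using h.maj 1) hj
  obtain ⟨c, s, hcs, hc⟩ := exists_sq_add_sq_eq_one_of_mem_Icc ⟨hp₁.le, hp⟩
  refine ⟨mergeAt g p (-s • g p + c • g (p + 1)), mergeAt μ p (μ p + μ (p + 1) - ξ k),
    ⟨?_, ?_, tendsto_mergeAt _ _ _ h.tendsto, ?_⟩, c • g p + s • g (p + 1), ?_, ?_, ?_,
    smul_add_smul_mem_span_range _ _ _ _ _,
    span_range_mergeAt_le (smul_add_smul_mem_span_range _ _ _ _ _) _⟩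
  · convert h.orthonormal.mergeAt_rotate p c s
    funext i
    simp [mergeAt, add_comm (s ^ 2), hcs]
  · convert h.gramDiagonal.mergeAt_rotate p c s using 2
    linear_combination hc - (μ p + μ (p + 1)) * hcs
  · convert h.maj.tail_mergeAt (hξ.comp_monotone (monotone_id.const_add k)) p
      using 2 <;> simp only [add_zero, add_assoc, add_comm 1]
  · simpa [hcs] using h.orthonormal.apply_rotate_self p c s
  · simpa [hc] using h.gramDiagonal.apply_rotate_self p c s
  · intro j
    simpa using h.orthonormal.apply_rotate_mergeAt p c s j

lemma exists_orthonormal_of_isStage (hB₁ : B₁.IsSymm) (h₀ : IsStage B₁ B₂ ξ 0 g μ)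
    (hξ : Antitone ξ) (hpos : ∀ n, 0 < ξ n) :
    ∃ f : ℕ → V, GramDiagonal B₁ f 1 ∧ ∀ i, B₂ (f i) (f i) = ξ i := by
  obtain ⟨S, hS⟩ := exists_seq_of_step (P := fun k a => IsStage B₁ B₂ ξ k a.1 a.2)
    (R := fun k a b => ∃ f, B₁ f f = 1 ∧ B₂ f f = ξ k ∧ (∀ j, B₁ f (b.1 j) = 0) ∧
      f ∈ span ℝ (Set.range a.1) ∧ span ℝ (Set.range b.1) ≤ span ℝ (Set.range a.1))
    (a₀ := (g, μ)) h₀ fun k a ha => by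
      obtain ⟨g', μ', hstage, hf⟩ := ha.exists_next hξ (hpos k)
      exact ⟨(g', μ'), hstage, hf⟩
  choose f hf₁ hf₂ horth hmem hspan using fun k => (hS k).2
  have hanti : Antitone fun k => span ℝ (Set.range (S k).1) := antitone_nat_of_succ_le hspan
  have hlt : ∀ i i', i < i' → B₁ (f i) (f i') = 0 := fun i i' hii' => by
    have hker : span ℝ (Set.range (S (i + 1)).1) ≤ LinearMap.ker (B₁ (f i)) :=
      span_le.2 <| Set.range_subset_iff.2 (horth i)
    exact hker (hanti hii' (hmem i'))
  refine ⟨f, fun i i' => ?_, hf₂⟩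
  rcases lt_trichotomy i i' with hii' | rfl | hii'
  · rw [if_neg hii'.ne, hlt i i' hii']
  · simp [hf₁]
  · rw [if_neg hii'.ne', hB₁.eq, hlt i' i hii']

end BilinForm

def weightedForm (w : ℕ → ℝ) : LinearMap.BilinForm ℝ (ℕ →₀ ℝ) :=
  Finsupp.linearCombination ℝ fun m => w m • Finsupp.lapply m

lemma weightedForm_apply (w : ℕ → ℝ) (x y : ℕ →₀ ℝ) :
    weightedForm w x y = ∑ m ∈ x.support, x m * y m * w m := by
  simp [weightedForm, Finsupp.linearCombination_apply, Finsupp.sum, mul_comm, mul_left_comm]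

lemma hasSum_weightedForm (w : ℕ → ℝ) (x y : ℕ →₀ ℝ) :
    HasSum (fun m => x m * y m * w m) (weightedForm w x y) := by
  rw [weightedForm_apply]
  exact hasSum_sum_of_ne_finset_zero fun m hm => by simp [Finsupp.notMem_support_iff.1 hm]

lemma weightedForm_isSymm (w : ℕ → ℝ) : (weightedForm w).IsSymm :=
  ⟨fun x y => (hasSum_weightedForm w x y).unique <| by
    simpa only [mul_comm (x _)] using hasSum_weightedForm w y x⟩

lemma gramDiagonal_weightedForm_single (w : ℕ → ℝ) :
    GramDiagonal (weightedForm w) (fun j => Finsupp.single j 1) w := by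
  intro j j'
  refine (hasSum_weightedForm w _ _).unique ?_
  convert hasSum_single (f := fun m => Finsupp.single j (1 : ℝ) m * Finsupp.single j' 1 m * w m) j
    fun m hm => by simp [Finsupp.single_eq_of_ne hm]
  by_cases h : j = j' <;> simp [h]

/-- If `ξ, η ∈ c₀*` with `ξ_n > 0` for all `n` and `ξ ≺ η`, then there is a
matrix `W` with orthonormal rows in ℓ² (the matrix of a co-isometry on real ℓ²) such that
`ξ_i = ∑_j W_{ij}² η_j` for every `i`. -/
theorem stmt_7 (ξ η : ℕ → ℝ) (hξ : IsCoStar ξ) (hη : IsCoStar η)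
    (hpos : ∀ n, 0 < ξ n) (hmaj : Maj ξ η) :
    ∃ W : ℕ → ℕ → ℝ,
      (∀ i i', HasSum (fun j => W i j * W i' j) (if i = i' then (1 : ℝ) else 0)) ∧
      (∀ i, HasSum (fun j => (W i j) ^ 2 * η j) (ξ i)) := by
  have h₀ : IsStage (weightedForm 1) (weightedForm η) ξ 0 (fun j => Finsupp.single j 1) η :=
    ⟨gramDiagonal_weightedForm_single 1, gramDiagonal_weightedForm_single η, hη.2.2,
      by simpa using hmaj⟩
  obtain ⟨f, horth, hval⟩ := exists_orthonormal_of_isStage (weightedForm_isSymm 1) h₀ hξ.2.1 hpos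
  refine ⟨fun i j => f i j, fun i i' => ?_, fun i => ?_⟩
  · simpa [horth i i'] using hasSum_weightedForm 1 (f i) (f i')
  · simpa [sq, hval i] using hasSum_weightedForm η (f i) (f i)

end
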